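/- arXiv:1704.00127 — 3 statements merged into one kernel-verified Lean document; each statement's English description precedes it below -/
import Mathlib

section
/- Let φ : X → Y be a measurable mapping between σ-finite measure spaces satisfying the Luzin N⁻¹-property, let 1 < p, r < ∞ and 1 ≤ s ≤ q ≤ ∞. Then φ induces a bounded composition operator C_φ : L_{r,s}(Y) → L_{p,q}(X) (i.e. f ∘ φ ∈ L_{p,q}(X) for every f ∈ L_{r,s}(Y) and ‖f ∘ φ‖_{p,q} ≤ K‖f‖_{r,s} for some constant K < ∞ independent of f) if and only if there is a constant K < ∞ such that ∫_B J_{φ⁻¹}(y) dν(y) ≤ K^p (ν(B))^{p/r} for every measurable set B ∈ 𝓑. -/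
/-!
Everything is read off distribution functions. Since `μ (φ ⁻¹' {|f| > λ}) = ∫_{|f| > λ} J dν`,
the condition on `J` bounds the distribution function of `f ∘ φ` by `K ^ p` times the
`p / r`-th power of that of `f`, which transfers to the Lorentz norms `‖f ∘ φ‖_{p,q} ≤ K ‖f‖_{r,q}`;
the embedding `L_{r,s} ⊆ L_{r,q}` for `s ≤ q` finishes. Conversely, the indicator of `B` has
`(r,s)`-norm exactly `ν(B) ^ (1 / r)`, and its composition with `φ` is the indicator of `φ⁻¹(B)`.
-/

open MeasureTheory Set ENNReal NNReal

/-- Distribution function `μ{x : |f(x)| > λ}` of a complex-valued function. -/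
noncomputable def distribFn {X : Type*} [MeasurableSpace X] (μ : Measure X)
    (f : X → ℂ) (lam : ℝ) : ℝ≥0∞ :=
  μ {x | lam < ‖f x‖}

/-- The Lorentz `(p,q)`-norm, `1 < p < ∞`, `1 ≤ q ≤ ∞`, computed via the
distribution function. -/
noncomputable def lorentzNorm {X : Type*} [MeasurableSpace X] (μ : Measure X)
    (p : ℝ) (q : ℝ≥0∞) (f : X → ℂ) : ℝ≥0∞ :=
  if q = ∞ then ⨆ lam ∈ Set.Ioi (0 : ℝ), ENNReal.ofReal lam * (distribFn μ f lam) ^ (1 / p)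
  else (q * ∫⁻ lam in Set.Ioi (0 : ℝ),
      (ENNReal.ofReal lam * (distribFn μ f lam) ^ (1 / p)) ^ q.toReal /
        ENNReal.ofReal lam) ^ (1 / q.toReal)

/-- Membership in the Lorentz space `L_{p,q}`. -/
def MemLorentz {X : Type*} [MeasurableSpace X] (μ : Measure X)
    (p : ℝ) (q : ℝ≥0∞) (f : X → ℂ) : Prop :=
  Measurable f ∧ lorentzNorm μ p q f < ∞

lemma ofReal_mul_lintegral_Ioo_rpow_div_self {s : ℝ} (hs : 0 < s) {a : ℝ} (ha : 0 ≤ a) :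
    ENNReal.ofReal s * ∫⁻ t in Ioo 0 a, ENNReal.ofReal t ^ s / ENNReal.ofReal t =
      ENNReal.ofReal a ^ s := by
  have hint : IntegrableOn (fun t : ℝ => t ^ (s - 1)) (Ioc 0 a) :=
    (intervalIntegral.intervalIntegrable_rpow' (by linarith : -1 < s - 1)).1
  have hprimitive : ∫⁻ t in Ioo 0 a, ENNReal.ofReal t ^ s / ENNReal.ofReal t =
      ENNReal.ofReal (a ^ s / s) := calc
    ∫⁻ t in Ioo 0 a, ENNReal.ofReal t ^ s / ENNReal.ofReal t
      = ∫⁻ t in Ioo 0 a, ENNReal.ofReal (t ^ (s - 1)) := by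
        refine setLIntegral_congr_fun measurableSet_Ioo fun t ht => ?_
        rw [ENNReal.ofReal_rpow_of_pos ht.1, ← ENNReal.ofReal_div_of_pos ht.1,
          Real.rpow_sub_one ht.1.ne']
    _ = ENNReal.ofReal (∫ t in Ioc 0 a, t ^ (s - 1)) := by
        rw [ofReal_integral_eq_lintegral_ofReal hint, Measure.restrict_congr_set Ioo_ae_eq_Ioc]
        filter_upwards [ae_restrict_mem measurableSet_Ioc] with t ht
        exact Real.rpow_nonneg ht.1.le _
    _ = ENNReal.ofReal (a ^ s / s) := by
        rw [← intervalIntegral.integral_of_le ha, integral_rpow (Or.inl (by linarith)),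
          sub_add_cancel, Real.zero_rpow hs.ne', sub_zero]
  rw [hprimitive, ← ENNReal.ofReal_mul hs.le, mul_div_cancel₀ _ hs.ne',
    ENNReal.ofReal_rpow_of_nonneg ha hs.le]

lemma ENNReal.ofReal_mul_rpow_div_ofReal {s : ℝ} (hs : 0 ≤ s) (t : ℝ) (c : ℝ≥0∞) :
    (ENNReal.ofReal t * c) ^ s / ENNReal.ofReal t =
      ENNReal.ofReal t ^ s / ENNReal.ofReal t * c ^ s := by
  rw [ENNReal.mul_rpow_of_nonneg _ _ hs, div_eq_mul_inv, div_eq_mul_inv, mul_right_comm]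

lemma ENNReal.div_rpow_one_div_toReal_ne_top {q s : ℝ≥0∞} (hs : s ≠ 0) :
    (q / s) ^ (1 / q.toReal) ≠ ∞ := by
  by_cases hq_top : q = ∞
  · simp [hq_top]
  exact ENNReal.rpow_ne_top_of_nonneg (by positivity)
    (ENNReal.mul_ne_top hq_top (ENNReal.inv_ne_top.2 hs))

section Lorentz

variable {X : Type*} [MeasurableSpace X] {μ : Measure X} {p : ℝ} {q s : ℝ≥0∞} {f : X → ℂ}

lemma distribFn_antitone : Antitone (distribFn μ f) :=
  fun _ _ hab => measure_mono fun _ hx => lt_of_le_of_lt hab hx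

lemma measurable_distribFn : Measurable (distribFn μ f) :=
  distribFn_antitone.measurable

lemma distribFn_indicator_one {A : Set X} {lam : ℝ} (hlam : 0 ≤ lam) :
    distribFn μ (A.indicator 1) lam = if lam < 1 then μ A else 0 := by
  unfold distribFn
  split_ifs with h
  · congr 1
    ext x
    by_cases hx : x ∈ A <;> simp [hx, h, not_lt.2 hlam]
  · convert measure_empty (μ := μ)
    ext x
    by_cases hx : x ∈ A <;> simp [hx, h, not_lt.2 hlam]

lemma lorentzNorm_top :
    lorentzNorm μ p ∞ f = ⨆ lam ∈ Ioi (0 : ℝ), ENNReal.ofReal lam * distribFn μ f lam ^ (1 / p) :=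
  if_pos rfl

lemma le_lorentzNorm_top {lam : ℝ} (hlam : 0 < lam) :
    ENNReal.ofReal lam * distribFn μ f lam ^ (1 / p) ≤ lorentzNorm μ p ∞ f := by
  rw [lorentzNorm_top]
  exact le_iSup₂_of_le lam hlam le_rfl

lemma lorentzNorm_rpow_toReal (hq : q ≠ 0) (hq_top : q ≠ ∞) :
    lorentzNorm μ p q f ^ q.toReal = q * ∫⁻ lam in Ioi (0 : ℝ),
      (ENNReal.ofReal lam * distribFn μ f lam ^ (1 / p)) ^ q.toReal / ENNReal.ofReal lam := by
  rw [lorentzNorm, if_neg hq_top, ← ENNReal.rpow_mul,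
    one_div_mul_cancel (ENNReal.toReal_pos hq hq_top).ne', ENNReal.rpow_one]

lemma lorentzNorm_le_mul_of_distribFn_le {Y : Type*} [MeasurableSpace Y] {ν : Measure Y}
    {r : ℝ} {g : Y → ℂ} {c : ℝ≥0∞} (hq : q ≠ 0) (hc : c ≠ ∞)
    (h : ∀ lam : ℝ, 0 < lam → distribFn μ f lam ^ (1 / p) ≤ c * distribFn ν g lam ^ (1 / r)) :
    lorentzNorm μ p q f ≤ c * lorentzNorm ν r q g := by
  by_cases hq_top : q = ∞
  · subst hq_top
    rw [lorentzNorm_top]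
    refine iSup₂_le fun lam hlam => ?_
    calc ENNReal.ofReal lam * distribFn μ f lam ^ (1 / p)
        ≤ ENNReal.ofReal lam * (c * distribFn ν g lam ^ (1 / r)) := by gcongr; exact h lam hlam
      _ = c * (ENNReal.ofReal lam * distribFn ν g lam ^ (1 / r)) := mul_left_comm _ _ _
      _ ≤ c * lorentzNorm ν r ∞ g := by gcongr; exact le_lorentzNorm_top hlam
  have hq' : 0 < q.toReal := ENNReal.toReal_pos hq hq_top
  rw [← ENNReal.rpow_le_rpow_iff hq', ENNReal.mul_rpow_of_nonneg _ _ hq'.le,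
    lorentzNorm_rpow_toReal hq hq_top, lorentzNorm_rpow_toReal hq hq_top, mul_left_comm,
    ← lintegral_const_mul' _ _ (ENNReal.rpow_ne_top_of_nonneg hq'.le hc)]
  gcongr q * ?_
  refine setLIntegral_mono' measurableSet_Ioi fun lam hlam => ?_
  rw [ENNReal.ofReal_mul_rpow_div_ofReal hq'.le, ENNReal.ofReal_mul_rpow_div_ofReal hq'.le,
    mul_left_comm, ← ENNReal.mul_rpow_of_nonneg _ _ hq'.le]
  gcongr
  exact h lam hlam

/-- On `(0, λ)` the integrand of `‖f‖_{p,q} ^ q` dominates `t ^ (q - 1) * D(λ) ^ (q / p)`,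
whose integral is `(λ * D(λ) ^ (1 / p)) ^ q / q`. -/
lemma lorentzNorm_top_le (hp : 0 ≤ p) (hq : q ≠ 0) :
    lorentzNorm μ p ∞ f ≤ lorentzNorm μ p q f := by
  by_cases hq_top : q = ∞
  · rw [hq_top]
  have hq' : 0 < q.toReal := ENNReal.toReal_pos hq hq_top
  rw [lorentzNorm_top]
  refine iSup₂_le fun lam hlam => ?_
  rw [← ENNReal.rpow_le_rpow_iff hq', lorentzNorm_rpow_toReal hq hq_top]
  set w := fun t : ℝ => ENNReal.ofReal t ^ q.toReal / ENNReal.ofReal t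
  have hw : Measurable w := by fun_prop
  have hpower : q * ∫⁻ t in Ioo 0 lam, w t = ENNReal.ofReal lam ^ q.toReal := by
    simpa only [ENNReal.ofReal_toReal hq_top] using
      ofReal_mul_lintegral_Ioo_rpow_div_self hq' (le_of_lt hlam)
  set E := distribFn μ f lam ^ (1 / p)
  calc (ENNReal.ofReal lam * E) ^ q.toReal
      = q * ∫⁻ t in Ioo 0 lam, w t * E ^ q.toReal := by
        rw [lintegral_mul_const _ hw, ← mul_assoc, hpower, ENNReal.mul_rpow_of_nonneg _ _ hq'.le]
    _ ≤ q * ∫⁻ t in Ioo 0 lam,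
          (ENNReal.ofReal t * distribFn μ f t ^ (1 / p)) ^ q.toReal / ENNReal.ofReal t := by
        gcongr q * ?_
        refine setLIntegral_mono' measurableSet_Ioo fun t ht => ?_
        rw [ENNReal.ofReal_mul_rpow_div_ofReal hq'.le]
        gcongr
        exact ENNReal.rpow_le_rpow (distribFn_antitone ht.2.le) (one_div_nonneg.2 hp)
    _ ≤ q * ∫⁻ t in Ioi 0,
          (ENNReal.ofReal t * distribFn μ f t ^ (1 / p)) ^ q.toReal / ENNReal.ofReal t := by
        gcongr q * ?_
        exact lintegral_mono_set Ioo_subset_Ioi_self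

/-- For `q = ∞` the constant is `(∞ / s) ^ (1 / 0) = 1`. -/
lemma lorentzNorm_le_rpow_div_mul_of_le (hp : 0 ≤ p) (hs : s ≠ 0) (hsq : s ≤ q) :
    lorentzNorm μ p q f ≤ (q / s) ^ (1 / q.toReal) * lorentzNorm μ p s f := by
  by_cases hq_top : q = ∞
  · simpa [hq_top] using lorentzNorm_top_le hp hs
  have hs_top : s ≠ ∞ := ne_top_of_le_ne_top hq_top hsq
  have hq : q ≠ 0 := (pos_iff_ne_zero.2 hs |>.trans_le hsq).ne'
  have hs' : 0 < s.toReal := ENNReal.toReal_pos hs hs_top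
  have hq' : 0 < q.toReal := ENNReal.toReal_pos hq hq_top
  have hsq' : 0 ≤ q.toReal - s.toReal := sub_nonneg.2 (ENNReal.toReal_mono hq_top hsq)
  set M := lorentzNorm μ p ∞ f
  set N := lorentzNorm μ p s f
  set G := fun lam : ℝ => ENNReal.ofReal lam * distribFn μ f lam ^ (1 / p)
  set H := fun lam : ℝ => G lam ^ s.toReal / ENNReal.ofReal lam
  have hH : Measurable H := by
    have := measurable_distribFn (μ := μ) (f := f)
    fun_prop
  rw [← ENNReal.rpow_le_rpow_iff hq', lorentzNorm_rpow_toReal hq hq_top,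
    ENNReal.mul_rpow_of_nonneg _ _ hq'.le, ← ENNReal.rpow_mul,
    one_div_mul_cancel hq'.ne', ENNReal.rpow_one]
  calc q * ∫⁻ lam in Ioi 0, G lam ^ q.toReal / ENNReal.ofReal lam
      ≤ q * ∫⁻ lam in Ioi 0, M ^ (q.toReal - s.toReal) * H lam := by
        gcongr q * ?_
        refine setLIntegral_mono' measurableSet_Ioi fun lam hlam => ?_
        rw [← sub_add_cancel q.toReal s.toReal, ENNReal.rpow_add_of_nonneg _ _ hsq' hs'.le,
          add_sub_cancel_right, mul_div_assoc]
        gcongr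
        exact le_lorentzNorm_top hlam
    _ = q / s * s * (M ^ (q.toReal - s.toReal) * ∫⁻ lam in Ioi 0, H lam) := by
        rw [lintegral_const_mul _ hH, ENNReal.div_mul_cancel hs hs_top]
    _ = q / s * M ^ (q.toReal - s.toReal) * N ^ s.toReal := by
        rw [lorentzNorm_rpow_toReal hs hs_top]
        ring
    _ ≤ q / s * N ^ (q.toReal - s.toReal) * N ^ s.toReal := by
        gcongr
        exact lorentzNorm_top_le hp hs
    _ = q / s * N ^ q.toReal := by
        rw [mul_assoc, ← ENNReal.rpow_add_of_nonneg _ _ hsq' hs'.le, sub_add_cancel]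

lemma lorentzNorm_top_indicator_one (hp : 0 < p) (A : Set X) :
    lorentzNorm μ p ∞ (A.indicator 1) = μ A ^ (1 / p) := by
  rw [lorentzNorm_top]
  refine le_antisymm (iSup₂_le fun lam hlam => ?_)
    (ENNReal.le_of_forall_lt_one_mul_le fun a ha => ?_)
  · rw [distribFn_indicator_one (le_of_lt hlam)]
    split_ifs with h
    · exact mul_le_of_le_one_left' (ENNReal.ofReal_le_one.2 h.le)
    · rw [ENNReal.zero_rpow_of_pos (one_div_pos.2 hp), mul_zero]
      exact zero_le
  · obtain rfl | ha0 := eq_or_ne a 0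
    · simp
    have ha' : 0 < a.toReal := ENNReal.toReal_pos ha0 ha.ne_top
    refine le_iSup₂_of_le a.toReal ha' ?_
    rw [ENNReal.ofReal_toReal ha.ne_top, distribFn_indicator_one ha'.le,
      if_pos (ENNReal.toReal_lt_of_lt_ofReal (by simpa using ha))]

lemma lorentzNorm_indicator_one (hp : 0 < p) (hs : s ≠ 0) (A : Set X) :
    lorentzNorm μ p s (A.indicator 1) = μ A ^ (1 / p) := by
  by_cases hs_top : s = ∞
  · rw [hs_top, lorentzNorm_top_indicator_one hp]
  have hs' : 0 < s.toReal := ENNReal.toReal_pos hs hs_top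
  set c := μ A ^ (1 / p)
  set w := fun t : ℝ => ENNReal.ofReal t ^ s.toReal / ENNReal.ofReal t
  have hintegrand : ∀ lam ∈ Ioi (0 : ℝ),
      (ENNReal.ofReal lam * distribFn μ (A.indicator 1) lam ^ (1 / p)) ^ s.toReal /
        ENNReal.ofReal lam = (Ioo 0 1).indicator (fun t => w t * c ^ s.toReal) lam := by
    intro lam hlam
    rw [distribFn_indicator_one (le_of_lt hlam)]
    split_ifs with h
    · rw [indicator_of_mem (show lam ∈ Ioo 0 1 from ⟨hlam, h⟩),
        ENNReal.ofReal_mul_rpow_div_ofReal hs'.le]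
    · rw [indicator_of_notMem fun h' => h h'.2, ENNReal.zero_rpow_of_pos (one_div_pos.2 hp),
        mul_zero, ENNReal.zero_rpow_of_pos hs', ENNReal.zero_div]
  have hpower : s * ∫⁻ t in Ioo 0 1, w t = 1 := by
    simpa only [ENNReal.ofReal_toReal hs_top, ENNReal.ofReal_one, ENNReal.one_rpow] using
      ofReal_mul_lintegral_Ioo_rpow_div_self hs' zero_le_one
  apply ENNReal.rpow_left_injective hs'.ne'
  dsimp only
  rw [lorentzNorm_rpow_toReal hs hs_top, setLIntegral_congr_fun measurableSet_Ioi hintegrand,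
    setLIntegral_indicator measurableSet_Ioo, inter_eq_left.2 Ioo_subset_Ioi_self,
    lintegral_mul_const _ (by fun_prop), ← mul_assoc, hpower, one_mul]

end Lorentz

section Composition

variable {X Y : Type*} [MeasurableSpace X] [MeasurableSpace Y] {μ : Measure X} {ν : Measure Y}
  {φ : X → Y} {p r : ℝ} {q s : ℝ≥0∞} {K : ℝ≥0}

lemma measure_preimage_le_of_lorentzNorm_comp_le (hp : 0 < p) (hr : 0 < r) (hq : q ≠ 0)
    (hs : s ≠ 0) (hK0 : K ≠ 0)
    (hK : ∀ f : Y → ℂ, MemLorentz ν r s f → lorentzNorm μ p q (f ∘ φ) ≤ K * lorentzNorm ν r s f)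
    {B : Set Y} (hB : MeasurableSet B) :
    μ (φ ⁻¹' B) ≤ (K : ℝ≥0∞) ^ p * ν B ^ (p / r) := by
  obtain hνB | hνB := eq_or_ne (ν B) ∞
  · rw [hνB, ENNReal.top_rpow_of_pos (div_pos hp hr), ENNReal.mul_top (by positivity)]
    exact le_top
  have hnorm : lorentzNorm ν r s (B.indicator 1) = ν B ^ (1 / r) :=
    lorentzNorm_indicator_one hr hs B
  have hmem : MemLorentz ν r s (B.indicator 1) :=
    ⟨measurable_one.indicator hB, hnorm ▸ ENNReal.rpow_lt_top_of_nonneg (by positivity) hνB⟩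
  have hcomp : B.indicator 1 ∘ φ = (φ ⁻¹' B).indicator (1 : X → ℂ) :=
    funext fun _ => (indicator_comp_right φ).symm
  have hroot := hK _ hmem
  rw [hcomp, lorentzNorm_indicator_one hp hq, hnorm] at hroot
  calc μ (φ ⁻¹' B) = (μ (φ ⁻¹' B) ^ (1 / p)) ^ p := by
        rw [← ENNReal.rpow_mul, one_div_mul_cancel hp.ne', ENNReal.rpow_one]
    _ ≤ (K * ν B ^ (1 / r)) ^ p := by gcongr
    _ = (K : ℝ≥0∞) ^ p * ν B ^ (p / r) := by
        rw [ENNReal.mul_rpow_of_nonneg _ _ hp.le, ← ENNReal.rpow_mul, one_div_mul_eq_div]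

lemma lorentzNorm_comp_le_of_measure_preimage_le (hp : 0 < p) (hq : q ≠ 0)
    (hK : ∀ B : Set Y, MeasurableSet B → μ (φ ⁻¹' B) ≤ (K : ℝ≥0∞) ^ p * ν B ^ (p / r))
    {f : Y → ℂ} (hf : Measurable f) :
    lorentzNorm μ p q (f ∘ φ) ≤ K * lorentzNorm ν r q f := by
  refine lorentzNorm_le_mul_of_distribFn_le hq ENNReal.coe_ne_top fun lam _ => ?_
  have hS : MeasurableSet {y | lam < ‖f y‖} := measurableSet_lt measurable_const hf.norm
  calc distribFn μ (f ∘ φ) lam ^ (1 / p)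
      ≤ ((K : ℝ≥0∞) ^ p * distribFn ν f lam ^ (p / r)) ^ (1 / p) := by
        gcongr
        exact hK _ hS
    _ = K * distribFn ν f lam ^ (1 / r) := by
        rw [ENNReal.mul_rpow_of_nonneg _ _ (by positivity), ← ENNReal.rpow_mul, ← ENNReal.rpow_mul,
          mul_one_div_cancel hp.ne', ENNReal.rpow_one, div_mul_div_comm, mul_one,
          div_mul_cancel_right₀ hp.ne', one_div]

end Composition

theorem boundedCompositionOperator_iff_general
    {X Y : Type*} [MeasurableSpace X] [MeasurableSpace Y]
    (μ : Measure X) (ν : Measure Y)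
    (φ : X → Y) (hφ : Measurable φ)
    (p r : ℝ) (hp : 1 < p) (hr : 1 < r)
    (s q : ℝ≥0∞) (hs : 1 ≤ s) (hsq : s ≤ q)
    (J : Y → ℝ≥0∞)
    (hJ : ∀ E : Set Y, MeasurableSet E → μ (φ ⁻¹' E) = ∫⁻ y in E, J y ∂ν) :
    (∃ K : ℝ≥0, (∀ f : Y → ℂ, MemLorentz ν r s f → MemLorentz μ p q (f ∘ φ)) ∧
        ∀ f : Y → ℂ, MemLorentz ν r s f →
          lorentzNorm μ p q (f ∘ φ) ≤ (K : ℝ≥0∞) * lorentzNorm ν r s f) ↔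
      (∃ K : ℝ≥0, ∀ B : Set Y, MeasurableSet B →
        ∫⁻ y in B, J y ∂ν ≤ (K : ℝ≥0∞) ^ p * (ν B) ^ (p / r)) := by
  have hp0 : 0 < p := one_pos.trans hp
  have hr0 : 0 < r := one_pos.trans hr
  have hs0 : s ≠ 0 := (one_pos.trans_le hs).ne'
  have hq0 : q ≠ 0 := (one_pos.trans_le (hs.trans hsq)).ne'
  constructor
  · rintro ⟨K, -, hK⟩
    -- `K` itself may fail: for `K = 0` and `ν B = ∞` the bound reads `μ (φ ⁻¹' B) ≤ 0 * ∞ = 0`.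
    have hK' : ∀ f : Y → ℂ, MemLorentz ν r s f →
        lorentzNorm μ p q (f ∘ φ) ≤ ((K + 1 : ℝ≥0) : ℝ≥0∞) * lorentzNorm ν r s f :=
      fun f hf => (hK f hf).trans (by gcongr; exact_mod_cast le_self_add)
    exact ⟨K + 1, fun B hB => hJ B hB ▸
      measure_preimage_le_of_lorentzNorm_comp_le hp0 hr0 hq0 hs0 (by positivity) hK' hB⟩
  · rintro ⟨K, hK⟩
    set C := (q / s) ^ (1 / q.toReal)
    have hKC : (K : ℝ≥0∞) * C ≠ ∞ :=
      ENNReal.mul_ne_top ENNReal.coe_ne_top (ENNReal.div_rpow_one_div_toReal_ne_top hs0)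
    have hbound : ∀ f, MemLorentz ν r s f →
        lorentzNorm μ p q (f ∘ φ) ≤ K * C * lorentzNorm ν r s f := fun f hf => calc
      lorentzNorm μ p q (f ∘ φ) ≤ K * lorentzNorm ν r q f :=
          lorentzNorm_comp_le_of_measure_preimage_le hp0 hq0
            (fun B hB => (hJ B hB).symm ▸ hK B hB) hf.1
      _ ≤ K * (C * lorentzNorm ν r s f) := by
          gcongr
          exact lorentzNorm_le_rpow_div_mul_of_le hr0.le hs0 hsq
      _ = K * C * lorentzNorm ν r s f := (mul_assoc _ _ _).symm
    refine ⟨(K * C).toNNReal,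
      fun f hf => ⟨hf.1.comp hφ, (hbound f hf).trans_lt (ENNReal.mul_lt_top hKC.lt_top hf.2)⟩,
      fun f hf => ?_⟩
    rw [ENNReal.coe_toNNReal hKC]
    exact hbound f hf

/-- A measurable mapping `φ` with the Luzin `N⁻¹`-property induces a bounded
composition operator `C_φ : L_{r,s}(Y) → L_{p,q}(X)` (for `s ≤ q`) iff
`∫_B J_{φ⁻¹} dν ≤ K^p (ν B)^{p/r}` for all measurable `B` and some constant `K`. -/
theorem boundedCompositionOperator_iff
    {X Y : Type*} [MeasurableSpace X] [MeasurableSpace Y]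
    (μ : Measure X) (ν : Measure Y) [SigmaFinite μ] [SigmaFinite ν]
    (φ : X → Y) (hφ : Measurable φ)
    (hN : ∀ S : Set Y, MeasurableSet S → ν S = 0 → μ (φ ⁻¹' S) = 0)
    (p r : ℝ) (hp : 1 < p) (hr : 1 < r)
    (s q : ℝ≥0∞) (hs : 1 ≤ s) (hsq : s ≤ q)
    (J : Y → ℝ≥0∞) (hJmeas : Measurable J)
    (hJ : ∀ E : Set Y, MeasurableSet E → μ (φ ⁻¹' E) = ∫⁻ y in E, J y ∂ν) :
    (∃ K : ℝ≥0, (∀ f : Y → ℂ, MemLorentz ν r s f → MemLorentz μ p q (f ∘ φ)) ∧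
        ∀ f : Y → ℂ, MemLorentz ν r s f →
          lorentzNorm μ p q (f ∘ φ) ≤ (K : ℝ≥0∞) * lorentzNorm ν r s f) ↔
      (∃ K : ℝ≥0, ∀ B : Set Y, MeasurableSet B →
        ∫⁻ y in B, J y ∂ν ≤ (K : ℝ≥0∞) ^ p * (ν B) ^ (p / r)) :=
  boundedCompositionOperator_iff_general μ ν φ hφ p r hp hr s q hs hsq J hJ
end

section
/- Let φ : X → Y be a measurable mapping between σ-finite measure spaces, 1 < p, r < ∞ and 1 ≤ s ≤ q ≤ ∞. If K < ∞ is a constant such that (μ(φ⁻¹(B)))^{1/p} ≤ K (ν(B))^{1/r} for every measurable set B ∈ 𝓑, then for every f ∈ L_{r,s}(Y) the composition satisfies ‖f ∘ φ‖_{p,q} ≤ K‖f‖_{r,s}. -/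
/-!
Applying the hypothesis to `B = {|f| > λ}` gives `λ μ_{f∘φ}(λ)^{1/p} ≤ K λ ν_f(λ)^{1/r}` for
every `λ`, hence `‖f ∘ φ‖_{p,q} ≤ K ‖f‖_{r,q}`, and it remains to show `‖f‖_{r,q} ≤ ‖f‖_{r,s}`.
Put `w(t) = (t ν_f(t)^{1/r})^s` and `F(t) = s ∫_0^t w(τ) dτ/τ`. As `ν_f` decreases, `w ≤ F`, so
with `c = q/s ≥ 1`
  `q ∫ w^c dt/t = c ∫ w^{c-1} dF ≤ c ∫ F^{c-1} dF ≤ F(∞)^c`.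
The last inequality holds for every finite measure `ρ = dF` on `ℝ`: by the layer-cake formula it
reduces to `ρ{F > y} ≤ F(∞) - y`, i.e. the law of `F` under `ρ` is dominated by the uniform
distribution on `[0, F(∞)]`.
-/

open MeasureTheory Set ENNReal NNReal

theorem lintegral_Ioo_ofReal_rpow_sub_one {a c : ℝ} (ha : 0 ≤ a) (hc : 0 < c) :
    ∫⁻ x in Ioo 0 a, ENNReal.ofReal (x ^ (c - 1)) = ENNReal.ofReal (a ^ c / c) := by
  have hint : IntegrableOn (fun x : ℝ => x ^ (c - 1)) (Ioo 0 a) := by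
    have h := intervalIntegral.intervalIntegrable_rpow' (a := 0) (b := a)
      (show (-1 : ℝ) < c - 1 by linarith)
    exact ((intervalIntegrable_iff_integrableOn_Ioc_of_le ha).1 h).mono_set Ioo_subset_Ioc_self
  have hnn : 0 ≤ᵐ[volume.restrict (Ioo 0 a)] fun x : ℝ => x ^ (c - 1) := by
    filter_upwards [self_mem_ae_restrict measurableSet_Ioo] with x hx
    exact Real.rpow_nonneg hx.1.le _
  rw [← ofReal_integral_eq_lintegral_ofReal hint hnn, ← integral_Ioc_eq_integral_Ioo,
    ← intervalIntegral.integral_of_le ha, integral_rpow (Or.inl (by linarith)),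
    sub_add_cancel, Real.zero_rpow hc.ne', sub_zero]

theorem measure_lt_toReal_measure_Iio_le (ρ : Measure ℝ) [IsFiniteMeasure ρ] (y : ℝ) :
    ρ {t | y < (ρ (Iio t)).toReal} ≤ ENNReal.ofReal ((ρ univ).toReal - y) := by
  have hmono : Monotone fun t => (ρ (Iio t)).toReal := fun a b hab =>
    ENNReal.toReal_mono (measure_ne_top _ _) (measure_mono (Iio_subset_Iio hab))
  rw [(measurableSet_lt measurable_const hmono.measurable).measure_eq_iSup_isCompact]
  refine iSup₂_le fun K hKS => iSup_le fun hK => ?_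
  rcases K.eq_empty_or_nonempty with rfl | hne
  · simp
  have hm : y < (ρ (Iio (sInf K))).toReal := hKS (hK.sInf_mem hne)
  have hle : ρ (Iio (sInf K)) ≤ ρ univ := measure_mono (subset_univ _)
  have hle' : (ρ (Iio (sInf K))).toReal ≤ (ρ univ).toReal :=
    ENNReal.toReal_mono (measure_ne_top _ _) hle
  calc ρ K ≤ ρ (Ici (sInf K)) := measure_mono fun t ht => csInf_le hK.bddBelow ht
    _ = ρ univ - ρ (Iio (sInf K)) := by
        rw [← compl_Iio, measure_compl measurableSet_Iio (measure_ne_top _ _)]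
    _ ≤ ENNReal.ofReal ((ρ univ).toReal - y) := by
        rw [ENNReal.le_ofReal_iff_toReal_le (by simp) (by linarith),
          ENNReal.toReal_sub_of_le hle (measure_ne_top _ _)]
        linarith

theorem ofReal_mul_lintegral_measure_Iio_rpow_le (ρ : Measure ℝ) [IsFiniteMeasure ρ] {c : ℝ}
    (hc : 1 ≤ c) : ENNReal.ofReal c * ∫⁻ t, ρ (Iio t) ^ (c - 1) ∂ρ ≤ ρ univ ^ c := by
  rcases hc.eq_or_lt with rfl | hc
  · simp
  set A := (ρ univ).toReal
  set G : ℝ → ℝ := fun t => (ρ (Iio t)).toReal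
  have hG : Monotone G := fun a b hab =>
    ENNReal.toReal_mono (measure_ne_top _ _) (measure_mono (Iio_subset_Iio hab))
  have hA : 0 ≤ A := ENNReal.toReal_nonneg
  have hcompare : ∀ y ∈ Ioi (0 : ℝ), ρ {t | y < G t} * ENNReal.ofReal (y ^ (c - 1 - 1)) ≤
      volume.restrict (Ioo 0 A) {x | y < x} * ENNReal.ofReal (y ^ (c - 1 - 1)) := by
    intro y (hy : 0 < y)
    gcongr ?_ * _
    change _ ≤ volume.restrict (Ioo 0 A) (Ioi y)
    rw [Measure.restrict_apply measurableSet_Ioi, Ioi_inter_Ioo, max_eq_left hy.le,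
      Real.volume_Ioo]
    exact measure_lt_toReal_measure_Iio_le ρ y
  calc ENNReal.ofReal c * ∫⁻ t, ρ (Iio t) ^ (c - 1) ∂ρ
      = ENNReal.ofReal c * ∫⁻ t, ENNReal.ofReal (G t ^ (c - 1)) ∂ρ := by
        congr 1
        refine lintegral_congr fun t => ?_
        rw [← ENNReal.ofReal_rpow_of_nonneg ENNReal.toReal_nonneg (by linarith),
          ENNReal.ofReal_toReal (measure_ne_top _ _)]
    _ = ENNReal.ofReal c * (ENNReal.ofReal (c - 1) *
          ∫⁻ y in Ioi 0, ρ {t | y < G t} * ENNReal.ofReal (y ^ (c - 1 - 1))) := by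
        rw [lintegral_rpow_eq_lintegral_meas_lt_mul ρ (.of_forall fun _ => ENNReal.toReal_nonneg)
          hG.measurable.aemeasurable (by linarith)]
    _ ≤ ENNReal.ofReal c * (ENNReal.ofReal (c - 1) *
          ∫⁻ y in Ioi 0, volume.restrict (Ioo 0 A) {x | y < x} *
            ENNReal.ofReal (y ^ (c - 1 - 1))) := by
        gcongr _ * (_ * ?_)
        exact setLIntegral_mono' measurableSet_Ioi hcompare
    _ = ENNReal.ofReal c * ∫⁻ x in Ioo 0 A, ENNReal.ofReal (x ^ (c - 1)) := by
        rw [lintegral_rpow_eq_lintegral_meas_lt_mul _ ?_ aemeasurable_id' (by linarith)]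
        filter_upwards [self_mem_ae_restrict measurableSet_Ioo] with x hx
        exact hx.1.le
    _ = ρ univ ^ c := by
        rw [lintegral_Ioo_ofReal_rpow_sub_one hA (by linarith), ← ENNReal.ofReal_mul (by linarith),
          mul_div_cancel₀ _ (by linarith), ← ENNReal.ofReal_rpow_of_nonneg hA (by linarith),
          ENNReal.ofReal_toReal (measure_ne_top _ _)]

theorem Antitone.rpow_mul_le_lintegral_Ioo {v : ℝ → ℝ≥0∞} (hv : Antitone v) {s : ℝ}
    (hs : 0 < s) (t : ℝ) :
    (ENNReal.ofReal t * v t) ^ s ≤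
      ENNReal.ofReal s * ∫⁻ τ in Ioo 0 t, (ENNReal.ofReal τ * v τ) ^ s / ENNReal.ofReal τ := by
  rcases le_or_gt t 0 with ht | ht
  · simp [ENNReal.ofReal_of_nonpos ht, hs]
  have hpow : ∀ τ ∈ Ioo 0 t, v t ^ s * ENNReal.ofReal (τ ^ (s - 1)) ≤
      (ENNReal.ofReal τ * v τ) ^ s / ENNReal.ofReal τ := by
    intro τ ⟨hτ, hτt⟩
    rw [ENNReal.mul_rpow_of_nonneg _ _ hs.le, ENNReal.ofReal_rpow_of_pos hτ,
      ENNReal.mul_div_right_comm, ← ENNReal.ofReal_div_of_pos hτ, ← Real.rpow_sub_one hτ.ne',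
      mul_comm]
    gcongr
    exact hv hτt.le
  calc (ENNReal.ofReal t * v t) ^ s
      = ENNReal.ofReal s * (v t ^ s * ∫⁻ τ in Ioo 0 t, ENNReal.ofReal (τ ^ (s - 1))) := by
        rw [lintegral_Ioo_ofReal_rpow_sub_one ht.le hs, mul_left_comm, ← ENNReal.ofReal_mul hs.le,
          mul_div_cancel₀ _ hs.ne', ENNReal.mul_rpow_of_nonneg _ _ hs.le,
          ENNReal.ofReal_rpow_of_pos ht, mul_comm]
    _ ≤ ENNReal.ofReal s * ∫⁻ τ in Ioo 0 t, (ENNReal.ofReal τ * v τ) ^ s / ENNReal.ofReal τ := by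
        gcongr _ * ?_
        exact (lintegral_const_mul_le _ _).trans (setLIntegral_mono' measurableSet_Ioo hpow)

theorem Antitone.lintegral_rpow_le_rpow_lintegral {v : ℝ → ℝ≥0∞} (hv : Antitone v) {s q : ℝ}
    (hs : 0 < s) (hsq : s ≤ q) :
    ENNReal.ofReal q * ∫⁻ t in Ioi 0, (ENNReal.ofReal t * v t) ^ q / ENNReal.ofReal t ≤
      (ENNReal.ofReal s * ∫⁻ t in Ioi 0, (ENNReal.ofReal t * v t) ^ s / ENNReal.ofReal t) ^
        (q / s) := by
  set c := q / s
  have hc : 1 ≤ c := (one_le_div hs).2 hsq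
  have hvm := hv.measurable
  set dens : ℝ → ℝ≥0∞ :=
    fun t => ENNReal.ofReal s * ((ENNReal.ofReal t * v t) ^ s / ENNReal.ofReal t)
  -- the measure `dF` of the header, so that `ρ (Iio t) = F t`
  set ρ := (volume.restrict (Ioi 0)).withDensity dens
  have hρ_univ : ρ univ = ENNReal.ofReal s *
      ∫⁻ t in Ioi 0, (ENNReal.ofReal t * v t) ^ s / ENNReal.ofReal t := by
    rw [withDensity_apply _ MeasurableSet.univ, Measure.restrict_univ,
      lintegral_const_mul' _ _ ENNReal.ofReal_ne_top]
  have hρ_Iio (t : ℝ) : ρ (Iio t) = ENNReal.ofReal s *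
      ∫⁻ τ in Ioo 0 t, (ENNReal.ofReal τ * v τ) ^ s / ENNReal.ofReal τ := by
    rw [withDensity_apply _ measurableSet_Iio, Measure.restrict_restrict measurableSet_Iio,
      Iio_inter_Ioi, lintegral_const_mul' _ _ ENNReal.ofReal_ne_top]
  rw [← hρ_univ]
  rcases eq_top_or_lt_top (ρ univ) with htop | hfin
  · simp [htop, ENNReal.top_rpow_of_pos (zero_lt_one.trans_le hc)]
  have : IsFiniteMeasure ρ := ⟨hfin⟩
  have hsplit (t : ℝ) : ENNReal.ofReal q * ((ENNReal.ofReal t * v t) ^ q / ENNReal.ofReal t) =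
      dens t * (ENNReal.ofReal c * ((ENNReal.ofReal t * v t) ^ s) ^ (c - 1)) := by
    have hq : q = s * (c - 1) + s := by simp only [c]; field_simp; ring
    rw [hq, ENNReal.rpow_add_of_nonneg _ _ (by nlinarith) hs.le, ENNReal.rpow_mul,
      show s * (c - 1) + s = c * s by ring, ENNReal.ofReal_mul (by linarith)]
    simp only [dens, div_eq_mul_inv]
    ring
  calc ENNReal.ofReal q * ∫⁻ t in Ioi 0, (ENNReal.ofReal t * v t) ^ q / ENNReal.ofReal t
      = ∫⁻ t, ENNReal.ofReal c * ((ENNReal.ofReal t * v t) ^ s) ^ (c - 1) ∂ρ := by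
        rw [← lintegral_const_mul' _ _ ENNReal.ofReal_ne_top, lintegral_withDensity_eq_lintegral_mul
          _ (by fun_prop) (by fun_prop)]
        exact lintegral_congr fun t => hsplit t
    _ ≤ ENNReal.ofReal c * ∫⁻ t, ρ (Iio t) ^ (c - 1) ∂ρ := by
        rw [← lintegral_const_mul' _ _ ENNReal.ofReal_ne_top]
        gcongr with t
        exact hρ_Iio t ▸ hv.rpow_mul_le_lintegral_Ioo hs t
    _ ≤ ρ univ ^ c := ofReal_mul_lintegral_measure_Iio_rpow_le ρ hc

theorem distribFn_rpow_antitone {X : Type*} [MeasurableSpace X] (μ : Measure X) (f : X → ℂ)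
    {a : ℝ} (ha : 0 ≤ a) : Antitone fun t => distribFn μ f t ^ a :=
  fun _ _ hab => ENNReal.rpow_le_rpow (measure_mono fun _ hx => lt_of_le_of_lt hab hx) ha

theorem ofReal_mul_distribFn_rpow_le_lorentzNorm {X : Type*} [MeasurableSpace X]
    (μ : Measure X) {p : ℝ} (hp : 0 ≤ p) {s : ℝ≥0∞} (hs : s ≠ 0) (f : X → ℂ) {t : ℝ}
    (ht : 0 < t) : ENNReal.ofReal t * distribFn μ f t ^ (1 / p) ≤ lorentzNorm μ p s f := by
  rw [lorentzNorm]
  split_ifs with hs_top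
  · exact le_iSup₂ (f := fun l (_ : l ∈ Ioi 0) => ENNReal.ofReal l * distribFn μ f l ^ (1 / p))
      t ht
  have hs' : 0 < s.toReal := ENNReal.toReal_pos hs hs_top
  have hv := distribFn_rpow_antitone μ f (one_div_nonneg.2 hp)
  calc ENNReal.ofReal t * distribFn μ f t ^ (1 / p)
      = ((ENNReal.ofReal t * distribFn μ f t ^ (1 / p)) ^ s.toReal) ^ (1 / s.toReal) := by
        rw [← ENNReal.rpow_mul, mul_one_div_cancel hs'.ne', ENNReal.rpow_one]
    _ ≤ _ := by
        gcongr
        refine (hv.rpow_mul_le_lintegral_Ioo hs' t).trans ?_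
        rw [ENNReal.ofReal_toReal hs_top]
        gcongr
        exact Ioo_subset_Ioi_self

theorem lorentzNorm_le_lorentzNorm_of_le {X : Type*} [MeasurableSpace X] (μ : Measure X)
    {p : ℝ} (hp : 0 ≤ p) {s q : ℝ≥0∞} (hs : s ≠ 0) (hsq : s ≤ q) (f : X → ℂ) :
    lorentzNorm μ p q f ≤ lorentzNorm μ p s f := by
  by_cases hq_top : q = ∞
  · rw [lorentzNorm, if_pos hq_top]
    exact iSup₂_le fun t ht => ofReal_mul_distribFn_rpow_le_lorentzNorm μ hp hs f ht
  have hs_top : s ≠ ∞ := ne_top_of_le_ne_top hq_top hsq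
  have hs' : 0 < s.toReal := ENNReal.toReal_pos hs hs_top
  have hsq' : s.toReal ≤ q.toReal := ENNReal.toReal_mono hq_top hsq
  have hv := distribFn_rpow_antitone μ f (one_div_nonneg.2 hp)
  rw [lorentzNorm, lorentzNorm, if_neg hq_top, if_neg hs_top]
  calc _ ≤ (((s * ∫⁻ t in Ioi 0, (ENNReal.ofReal t * distribFn μ f t ^ (1 / p)) ^ s.toReal /
        ENNReal.ofReal t)) ^ (q.toReal / s.toReal)) ^ (1 / q.toReal) := by
        gcongr
        simpa only [ENNReal.ofReal_toReal hq_top, ENNReal.ofReal_toReal hs_top] using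
          hv.lintegral_rpow_le_rpow_lintegral hs' hsq'
    _ = _ := by
        rw [← ENNReal.rpow_mul]
        congr 1
        field_simp [(hs'.trans_le hsq').ne']

theorem lorentzNorm_le_mul_of_distribFn_rpow_le {X Y : Type*} [MeasurableSpace X]
    [MeasurableSpace Y] {μ : Measure X} {ν : Measure Y} {p r : ℝ} {q : ℝ≥0∞} (hq : q ≠ 0)
    {g : X → ℂ} {f : Y → ℂ} {K : ℝ≥0}
    (h : ∀ t, distribFn μ g t ^ (1 / p) ≤ K * distribFn ν f t ^ (1 / r)) :
    lorentzNorm μ p q g ≤ K * lorentzNorm ν r q f := by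
  have hmul (t : ℝ) : ENNReal.ofReal t * distribFn μ g t ^ (1 / p) ≤
      K * (ENNReal.ofReal t * distribFn ν f t ^ (1 / r)) := by
    rw [mul_left_comm]
    gcongr
    exact h t
  rw [lorentzNorm, lorentzNorm]
  split_ifs with hq_top
  · simp_rw [ENNReal.mul_iSup]
    exact iSup₂_le fun t ht => (hmul t).trans (le_iSup₂_of_le t ht le_rfl)
  have hq' : 0 < q.toReal := ENNReal.toReal_pos hq hq_top
  calc _ ≤ (q * ∫⁻ t in Ioi 0, (K : ℝ≥0∞) ^ q.toReal *
        ((ENNReal.ofReal t * distribFn ν f t ^ (1 / r)) ^ q.toReal / ENNReal.ofReal t)) ^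
          (1 / q.toReal) := by
        gcongr with t
        rw [← mul_div_assoc, ← ENNReal.mul_rpow_of_nonneg _ _ hq'.le]
        exact ENNReal.div_le_div_right (ENNReal.rpow_le_rpow (hmul t) hq'.le) _
    _ = _ := by
        rw [lintegral_const_mul' _ _ (ENNReal.rpow_ne_top_of_nonneg hq'.le ENNReal.coe_ne_top),
          mul_left_comm, ENNReal.mul_rpow_of_nonneg _ _ (by positivity), ← ENNReal.rpow_mul,
          mul_one_div_cancel hq'.ne', ENNReal.rpow_one]

theorem compositionBound_of_measure_preimage_le_general
    {X Y : Type*} [MeasurableSpace X] [MeasurableSpace Y]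
    (μ : Measure X) (ν : Measure Y)
    (φ : X → Y)
    (p r : ℝ) (hr : 1 < r)
    (s q : ℝ≥0∞) (hs : 1 ≤ s) (hsq : s ≤ q)
    (K : ℝ≥0)
    (hK : ∀ B : Set Y, MeasurableSet B →
      (μ (φ ⁻¹' B)) ^ (1 / p) ≤ (K : ℝ≥0∞) * (ν B) ^ (1 / r)) :
    ∀ f : Y → ℂ, MemLorentz ν r s f →
      lorentzNorm μ p q (f ∘ φ) ≤ (K : ℝ≥0∞) * lorentzNorm ν r s f := by
  intro f hf
  have hs₀ : s ≠ 0 := (zero_lt_one.trans_le hs).ne'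
  calc lorentzNorm μ p q (f ∘ φ) ≤ K * lorentzNorm ν r q f :=
        lorentzNorm_le_mul_of_distribFn_rpow_le (ne_bot_of_le_ne_bot hs₀ hsq)
          fun t => hK _ (measurableSet_lt measurable_const hf.1.norm)
    _ ≤ K * lorentzNorm ν r s f := by
        gcongr
        exact lorentzNorm_le_lorentzNorm_of_le ν (by linarith) hs₀ hsq f

/-- If `(μ(φ⁻¹(B)))^{1/p} ≤ K (ν B)^{1/r}` for every measurable set `B`,
then `‖f ∘ φ‖_{p,q} ≤ K ‖f‖_{r,s}` for every `f ∈ L_{r,s}(Y)` (where `s ≤ q`). -/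
theorem compositionBound_of_measure_preimage_le
    {X Y : Type*} [MeasurableSpace X] [MeasurableSpace Y]
    (μ : Measure X) (ν : Measure Y) [SigmaFinite μ] [SigmaFinite ν]
    (φ : X → Y) (hφ : Measurable φ)
    (p r : ℝ) (hp : 1 < p) (hr : 1 < r)
    (s q : ℝ≥0∞) (hs : 1 ≤ s) (hsq : s ≤ q)
    (K : ℝ≥0)
    (hK : ∀ B : Set Y, MeasurableSet B →
      (μ (φ ⁻¹' B)) ^ (1 / p) ≤ (K : ℝ≥0∞) * (ν B) ^ (1 / r)) :
    ∀ f : Y → ℂ, MemLorentz ν r s f →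
      lorentzNorm μ p q (f ∘ φ) ≤ (K : ℝ≥0∞) * lorentzNorm ν r s f :=
  compositionBound_of_measure_preimage_le_general μ ν φ p r hr s q hs hsq K hK
end

section
/- Let φ : X → Y be a measurable mapping between σ-finite measure spaces, 1 < p < ∞, 1 ≤ q < ∞, and suppose the composition operator C_φ : L_{p,q}(Y, 𝓑, ν) → L_{p,q}(X, 𝒜, μ) is surjective. Then for every set A ∈ 𝒜 with μ(A) < ∞ there exists B ∈ 𝓑 such that A = φ⁻¹(B) up to a μ-null set; consequently, every set of 𝒜 of finite measure belongs (modulo μ-null sets) to the σ-algebra φ⁻¹(𝓑) = {φ⁻¹(B) : B ∈ 𝓑}. -/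
open MeasureTheory Set ENNReal NNReal

/-! The indicator of a set of finite measure lies in `L_{p,q}`, so surjectivity of
`C_φ` writes `1_A = f ∘ φ` almost everywhere; then `A` agrees a.e. with `φ⁻¹(f⁻¹{1})`. -/

open Function

section Lorentz

variable {X : Type*} [MeasurableSpace X] {μ : Measure X} {f : X → ℂ} {p R lam : ℝ} {q : ℝ≥0∞}

lemma distribFn_le_measure_support (hlam : 0 ≤ lam) :
    distribFn μ f lam ≤ μ (support f) :=
  measure_mono fun _ hx => norm_ne_zero_iff.mp (hlam.trans_lt hx).ne'

lemma distribFn_eq_zero_of_norm_le (hf : ∀ x, ‖f x‖ ≤ R) (hlam : R ≤ lam) :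
    distribFn μ f lam = 0 := by
  rw [distribFn, show {x | lam < ‖f x‖} = ∅ from
      eq_empty_of_forall_notMem fun x hx => not_lt.mpr ((hf x).trans hlam) hx,
    measure_empty]

lemma ofReal_mul_distribFn_rpow_eq_zero (hp : 0 < p) (hf : ∀ x, ‖f x‖ ≤ R) (hlam : R ≤ lam) :
    ENNReal.ofReal lam * distribFn μ f lam ^ (1 / p) = 0 := by
  rw [distribFn_eq_zero_of_norm_le hf hlam, zero_rpow_of_pos (by positivity), mul_zero]

lemma lorentz_integrand_le_indicator (hp : 0 < p) (hq : 1 ≤ q.toReal) (hf : ∀ x, ‖f x‖ ≤ R)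
    (hlam : 0 < lam) :
    (ENNReal.ofReal lam * distribFn μ f lam ^ (1 / p)) ^ q.toReal / ENNReal.ofReal lam ≤
      (Iio R).indicator
        (fun _ => ENNReal.ofReal R ^ (q.toReal - 1) * (μ (support f) ^ (1 / p)) ^ q.toReal)
        lam := by
  rcases lt_or_ge lam R with hR | hR
  · rw [indicator_of_mem (mem_Iio.mpr hR)]
    have hlam0 : ENNReal.ofReal lam ≠ 0 := by simpa using hlam
    calc (ENNReal.ofReal lam * distribFn μ f lam ^ (1 / p)) ^ q.toReal / ENNReal.ofReal lam
        ≤ (ENNReal.ofReal lam * μ (support f) ^ (1 / p)) ^ q.toReal /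
            ENNReal.ofReal lam := by
          gcongr
          exact distribFn_le_measure_support hlam.le
      _ = ENNReal.ofReal lam ^ (q.toReal - 1) * (μ (support f) ^ (1 / p)) ^ q.toReal := by
          rw [mul_rpow_of_nonneg _ _ (by linarith), ENNReal.mul_div_right_comm,
            rpow_sub _ _ hlam0 ofReal_ne_top, ENNReal.rpow_one]
      _ ≤ ENNReal.ofReal R ^ (q.toReal - 1) * (μ (support f) ^ (1 / p)) ^ q.toReal := by
          gcongr
  · rw [ofReal_mul_distribFn_rpow_eq_zero hp hf hR, zero_rpow_of_pos (by linarith),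
      ENNReal.zero_div]
    exact zero_le

lemma lorentzNorm_lt_top_of_norm_le (hp : 0 < p) (hq : 1 ≤ q) (hf : ∀ x, ‖f x‖ ≤ R)
    (hsupp : μ (support f) < ∞) : lorentzNorm μ p q f < ∞ := by
  have hM : μ (support f) ^ (1 / p) ≠ ∞ := rpow_ne_top_of_nonneg (by positivity) hsupp.ne
  rw [lorentzNorm]
  split_ifs with hq_top
  · refine lt_of_le_of_lt (iSup₂_le fun lam hlam => ?_)
      (mul_lt_top ofReal_lt_top hM.lt_top : ENNReal.ofReal R * _ < ∞)
    rcases lt_or_ge lam R with hR | hR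
    · gcongr
      exact distribFn_le_measure_support (le_of_lt hlam)
    · rw [ofReal_mul_distribFn_rpow_eq_zero hp hf hR]
      exact zero_le
  · have hq1 : 1 ≤ q.toReal := by simpa using toReal_mono hq_top hq
    refine rpow_lt_top_of_nonneg (by positivity) (mul_ne_top hq_top (ne_top_of_le_ne_top ?_
      (setLIntegral_mono' measurableSet_Ioi fun lam hlam =>
        lorentz_integrand_le_indicator hp hq1 hf hlam)))
    rw [setLIntegral_indicator measurableSet_Iio, setLIntegral_const, inter_comm, Ioi_inter_Iio,
      Real.volume_Ioo]
    finiteness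

lemma memLorentz_indicator_one {A : Set X} (hp : 0 < p) (hq : 1 ≤ q) (hA : MeasurableSet A)
    (hAfin : μ A < ∞) : MemLorentz μ p q (A.indicator 1) :=
  ⟨measurable_one.indicator hA, lorentzNorm_lt_top_of_norm_le hp hq
    (fun _ => norm_indicator_le_norm_self 1 _ |>.trans_eq norm_one)
    ((measure_mono support_indicator_subset).trans_lt hAfin)⟩

end Lorentz

lemma measure_symmDiff_preimage_eq_zero_of_indicator_ae_eq {X Y : Type*} [MeasurableSpace X]
    {μ : Measure X} {A : Set X} {g : Y → ℂ} {φ : X → Y} (h : A.indicator 1 =ᵐ[μ] g ∘ φ) :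
    μ (symmDiff A (φ ⁻¹' (g ⁻¹' {1}))) = 0 := by
  have hA : A.indicator 1 ⁻¹' {(1 : ℂ)} = A := by
    ext x
    by_cases hx : x ∈ A <;> simp [hx]
  rw [measure_symmDiff_eq_zero_iff, ← hA]
  exact h.preimage {1}

theorem preimage_sigmaAlgebra_of_surjective_general
    {X Y : Type*} [MeasurableSpace X] [MeasurableSpace Y]
    (μ : Measure X) (ν : Measure Y)
    (φ : X → Y)
    (p : ℝ) (hp : 1 < p) (q : ℝ≥0∞) (hq : 1 ≤ q)
    (hsurj : ∀ h : X → ℂ, MemLorentz μ p q h →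
      ∃ f : Y → ℂ, MemLorentz ν p q f ∧ h =ᵐ[μ] (f ∘ φ)) :
    ∀ A : Set X, MeasurableSet A → μ A < ∞ →
      ∃ B : Set Y, MeasurableSet B ∧ μ (symmDiff A (φ ⁻¹' B)) = 0 := by
  intro A hA hAfin
  obtain ⟨f, hf, hae⟩ := hsurj _ (memLorentz_indicator_one (by linarith) hq hA hAfin)
  exact ⟨f ⁻¹' {1}, hf.1 (measurableSet_singleton 1),
    measure_symmDiff_preimage_eq_zero_of_indicator_ae_eq hae⟩

/-- If the composition operator `C_φ : L_{p,q}(Y) → L_{p,q}(X)` is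
surjective (on a.e.-equivalence classes), then every `A ∈ 𝒜` with `μ(A) < ∞` coincides,
up to a `μ`-null set, with `φ⁻¹(B)` for some `B ∈ 𝓑`. -/
theorem preimage_sigmaAlgebra_of_surjective
    {X Y : Type*} [MeasurableSpace X] [MeasurableSpace Y]
    (μ : Measure X) (ν : Measure Y) [SigmaFinite μ] [SigmaFinite ν]
    (φ : X → Y) (hφ : Measurable φ)
    (p : ℝ) (hp : 1 < p) (q : ℝ≥0∞) (hq : 1 ≤ q) (hq' : q ≠ ∞)
    (hsurj : ∀ h : X → ℂ, MemLorentz μ p q h →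
      ∃ f : Y → ℂ, MemLorentz ν p q f ∧ h =ᵐ[μ] (f ∘ φ)) :
    ∀ A : Set X, MeasurableSet A → μ A < ∞ →
      ∃ B : Set Y, MeasurableSet B ∧ μ (symmDiff A (φ ⁻¹' B)) = 0 :=
  preimage_sigmaAlgebra_of_surjective_general μ ν φ p hp q hq hsurj
end
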